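/- If f_1: (0,∞) → (0,∞) is convex and f_2: (0,∞) → (0,∞) is concave, then for all real k ≥ n, [D_{f⃗}(P⃗,Q⃗; k)]^n ≥ [f_1(1)]^k · [f_2(1)]^{n−k}. -/

import Mathlib

open MeasureTheory

/-- Supporting line at `1` for a convex function on `(0,∞)`. -/
lemma convex_support_line_at_one {f : ℝ → ℝ} (hf : ConvexOn ℝ (Set.Ioi (0:ℝ)) f) :
    ∃ c : ℝ, ∀ t ∈ Set.Ioi (0:ℝ), f 1 + c * (t - 1) ≤ f t := by
  set S : Set ℝ := (fun y => (f y - f 1) / (y - 1)) '' Set.Ioi (1:ℝ) with hS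
  have h1 : (1:ℝ) ∈ Set.Ioi (0:ℝ) := by norm_num
  have hhalf : (1/2:ℝ) ∈ Set.Ioi (0:ℝ) := by norm_num
  have hlb : ∀ z ∈ S, (f 1 - f (1/2)) / (1 - 1/2) ≤ z := by
    rintro z ⟨y, hy, rfl⟩
    exact hf.slope_mono_adjacent hhalf (Set.mem_Ioi.mpr (lt_trans one_pos hy)) (by norm_num) hy
  have hbdd : BddBelow S := ⟨_, hlb⟩
  have hne : S.Nonempty := ⟨_, ⟨2, by norm_num, rfl⟩⟩
  refine ⟨sInf S, fun t ht => ?_⟩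
  rcases lt_trichotomy t 1 with h | h | h
  · have hlow : (f 1 - f t) / (1 - t) ∈ lowerBounds S := by
      rintro z ⟨y, hy, rfl⟩
      exact hf.slope_mono_adjacent ht (Set.mem_Ioi.mpr (lt_trans one_pos hy)) h hy
    have hle : (f 1 - f t) / (1 - t) ≤ sInf S := le_csInf hne hlow
    have h1t : 0 < 1 - t := by linarith
    rw [div_le_iff₀ h1t] at hle
    nlinarith [hle]
  · subst h; simp
  · have hmem : (f t - f 1) / (t - 1) ∈ S := ⟨t, h, rfl⟩
    have hle : sInf S ≤ (f t - f 1) / (t - 1) := csInf_le hbdd hmem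
    have ht1 : 0 < t - 1 := by linarith
    rw [le_div_iff₀ ht1] at hle
    linarith

/-- Supporting line at `1` for a concave function on `(0,∞)`. -/
lemma concave_support_line_at_one {f : ℝ → ℝ} (hf : ConcaveOn ℝ (Set.Ioi (0:ℝ)) f) :
    ∃ c : ℝ, ∀ t ∈ Set.Ioi (0:ℝ), f t ≤ f 1 + c * (t - 1) := by
  obtain ⟨c, hc⟩ := convex_support_line_at_one hf.neg
  refine ⟨-c, fun t ht => ?_⟩
  have := hc t ht
  simp only [Pi.neg_apply] at this
  linarith

/-- Supporting line for `t ↦ t^a`, `a ≥ 1`, at `t₀ > 0`. -/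
lemma rpow_support_line {a t₀ t : ℝ} (ha : 1 ≤ a) (ht₀ : 0 < t₀) (ht : 0 < t) :
    t₀ ^ a + a * t₀ ^ (a - 1) * (t - t₀) ≤ t ^ a := by
  have hs : -1 ≤ t / t₀ - 1 := by
    have : 0 < t / t₀ := div_pos ht ht₀
    linarith
  have hber := one_add_mul_self_le_rpow_one_add hs ha
  rw [add_sub_cancel] at hber
  have hmul := mul_le_mul_of_nonneg_left hber (le_of_lt (Real.rpow_pos_of_pos ht₀ a))
  have hdiv : t₀ ^ a * (t / t₀) ^ a = t ^ a := by
    rw [Real.div_rpow ht.le ht₀.le]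
    field_simp
  rw [hdiv] at hmul
  refine le_trans (le_of_eq ?_) hmul
  have h1 : t₀ ^ (a - 1) = t₀ ^ a / t₀ := by
    rw [Real.rpow_sub ht₀, Real.rpow_one]
  rw [h1]
  field_simp

/-- Jensen lower bound via supporting line, convex case. -/
lemma jensen_lower_of_convex {X : Type*} [MeasurableSpace X] (μ : Measure X)
    (f : ℝ → ℝ) (p q : X → ℝ) (hf : ConvexOn ℝ (Set.Ioi (0:ℝ)) f)
    (hppos : ∀ᵐ x ∂μ, 0 < p x) (hqpos : ∀ᵐ x ∂μ, 0 < q x)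
    (hpint : Integrable p μ) (hqint : Integrable q μ)
    (hp1 : ∫ x, p x ∂μ = 1) (hq1 : ∫ x, q x ∂μ = 1)
    (hint : Integrable (fun x => f (p x / q x) * q x) μ) :
    f 1 ≤ ∫ x, f (p x / q x) * q x ∂μ := by
  obtain ⟨c, hc⟩ := convex_support_line_at_one hf
  have key : ∀ᵐ x ∂μ, f 1 * q x + c * (p x - q x) ≤ f (p x / q x) * q x := by
    filter_upwards [hppos, hqpos] with x hp hq
    have hr : p x / q x ∈ Set.Ioi (0:ℝ) := div_pos hp hq
    have hmul := mul_le_mul_of_nonneg_right (hc _ hr) hq.le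
    have hcancel : p x / q x * q x = p x := div_mul_cancel₀ _ hq.ne'
    have expand : (f 1 + c * (p x / q x - 1)) * q x = f 1 * q x + c * (p x - q x) := by
      field_simp
    linarith [hmul, expand.symm.le]
  have hsubi : Integrable (fun x => p x - q x) μ := hpint.sub hqint
  have hLint : Integrable (fun x => f 1 * q x + c * (p x - q x)) μ :=
    (hqint.const_mul (f 1)).add (hsubi.const_mul c)
  have hmono := integral_mono_ae hLint hint key
  have hcalc : ∫ x, (f 1 * q x + c * (p x - q x)) ∂μ = f 1 := by
    rw [integral_add (hqint.const_mul (f 1)) (hsubi.const_mul c),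
      integral_const_mul, integral_const_mul, integral_sub hpint hqint, hp1, hq1]
    ring
  linarith [hmono, hcalc.symm.le]

/-- Jensen upper bound via supporting line, concave case. -/
lemma jensen_upper_of_concave {X : Type*} [MeasurableSpace X] (μ : Measure X)
    (f : ℝ → ℝ) (p q : X → ℝ) (hf : ConcaveOn ℝ (Set.Ioi (0:ℝ)) f)
    (hppos : ∀ᵐ x ∂μ, 0 < p x) (hqpos : ∀ᵐ x ∂μ, 0 < q x)
    (hpint : Integrable p μ) (hqint : Integrable q μ)
    (hp1 : ∫ x, p x ∂μ = 1) (hq1 : ∫ x, q x ∂μ = 1)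
    (hint : Integrable (fun x => f (p x / q x) * q x) μ) :
    ∫ x, f (p x / q x) * q x ∂μ ≤ f 1 := by
  obtain ⟨c, hc⟩ := concave_support_line_at_one hf
  have key : ∀ᵐ x ∂μ, f (p x / q x) * q x ≤ f 1 * q x + c * (p x - q x) := by
    filter_upwards [hppos, hqpos] with x hp hq
    have hr : p x / q x ∈ Set.Ioi (0:ℝ) := div_pos hp hq
    have hmul := mul_le_mul_of_nonneg_right (hc _ hr) hq.le
    have hcancel : p x / q x * q x = p x := div_mul_cancel₀ _ hq.ne'
    have expand : (f 1 + c * (p x / q x - 1)) * q x = f 1 * q x + c * (p x - q x) := by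
      field_simp
    linarith [hmul, expand.le]
  have hsubi : Integrable (fun x => p x - q x) μ := hpint.sub hqint
  have hLint : Integrable (fun x => f 1 * q x + c * (p x - q x)) μ :=
    (hqint.const_mul (f 1)).add (hsubi.const_mul c)
  have hmono := integral_mono_ae hint hLint key
  have hcalc : ∫ x, (f 1 * q x + c * (p x - q x)) ∂μ = f 1 := by
    rw [integral_add (hqint.const_mul (f 1)) (hsubi.const_mul c),
      integral_const_mul, integral_const_mul, integral_sub hpint hqint, hp1, hq1]
    ring
  linarith [hmono, hcalc.le]

/-- If `f₁ : (0,∞) → (0,∞)` is convex and `f₂ : (0,∞) → (0,∞)` is concave, then for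
all real `k ≥ n`, `[D_{f⃗}(P⃗,Q⃗; k)]^n ≥ [f₁(1)]^k · [f₂(1)]^{n−k}`. -/
theorem ith_mixed_f_divergence_ge_convex_concave
    {X : Type*} [MeasurableSpace X] (μ : Measure X) [IsFiniteMeasure μ]
    (n : ℕ) (hn : 0 < n) (f₁ f₂ : ℝ → ℝ) (p₁ p₂ q₁ q₂ : X → ℝ)
    (hfpos₁ : ∀ t ∈ Set.Ioi (0:ℝ), 0 < f₁ t) (hfpos₂ : ∀ t ∈ Set.Ioi (0:ℝ), 0 < f₂ t)
    (hf₁ : ConvexOn ℝ (Set.Ioi (0:ℝ)) f₁) (hf₂ : ConcaveOn ℝ (Set.Ioi (0:ℝ)) f₂)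
    (hpm₁ : Measurable p₁) (hpm₂ : Measurable p₂)
    (hqm₁ : Measurable q₁) (hqm₂ : Measurable q₂)
    (hp0₁ : ∀ x, 0 ≤ p₁ x) (hp0₂ : ∀ x, 0 ≤ p₂ x)
    (hq0₁ : ∀ x, 0 ≤ q₁ x) (hq0₂ : ∀ x, 0 ≤ q₂ x)
    (hp1₁ : ∫ x, p₁ x ∂μ = 1) (hp1₂ : ∫ x, p₂ x ∂μ = 1)
    (hq1₁ : ∫ x, q₁ x ∂μ = 1) (hq1₂ : ∫ x, q₂ x ∂μ = 1)
    (hpne₁ : ∀ᵐ x ∂μ, p₁ x ≠ 0) (hpne₂ : ∀ᵐ x ∂μ, p₂ x ≠ 0)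
    (hqne₁ : ∀ᵐ x ∂μ, q₁ x ≠ 0) (hqne₂ : ∀ᵐ x ∂μ, q₂ x ≠ 0)
    (hint₁ : Integrable (fun x => f₁ (p₁ x / q₁ x) * q₁ x) μ)
    (hint₂ : Integrable (fun x => f₂ (p₂ x / q₂ x) * q₂ x) μ)
    (k : ℝ) (hk : (n : ℝ) ≤ k)
    (hintk : Integrable (fun x => (f₁ (p₁ x / q₁ x) * q₁ x) ^ (k / n)
        * (f₂ (p₂ x / q₂ x) * q₂ x) ^ ((n - k) / n)) μ) :
    (f₁ 1) ^ k * (f₂ 1) ^ ((n : ℝ) - k)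
      ≤ (∫ x, (f₁ (p₁ x / q₁ x) * q₁ x) ^ (k / n)
        * (f₂ (p₂ x / q₂ x) * q₂ x) ^ ((n - k) / n) ∂μ) ^ (n : ℝ) := by
  have hn' : (0:ℝ) < n := Nat.cast_pos.mpr hn
  set a : ℝ := k / n with ha
  set b : ℝ := ((n:ℝ) - k) / n with hb
  have ha1 : 1 ≤ a := (one_le_div hn').mpr hk
  have hab : b = 1 - a := by rw [ha, hb]; field_simp
  have hb0 : b ≤ 0 := by rw [hab]; linarith
  set g : X → ℝ := fun x => f₁ (p₁ x / q₁ x) * q₁ x with hgdef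
  set h : X → ℝ := fun x => f₂ (p₂ x / q₂ x) * q₂ x with hhdef
  -- positivity a.e.
  have hq₁pos : ∀ᵐ x ∂μ, 0 < q₁ x := hqne₁.mono fun x hx => (hq0₁ x).lt_of_ne' hx
  have hq₂pos : ∀ᵐ x ∂μ, 0 < q₂ x := hqne₂.mono fun x hx => (hq0₂ x).lt_of_ne' hx
  have hp₁pos : ∀ᵐ x ∂μ, 0 < p₁ x := hpne₁.mono fun x hx => (hp0₁ x).lt_of_ne' hx
  have hp₂pos : ∀ᵐ x ∂μ, 0 < p₂ x := hpne₂.mono fun x hx => (hp0₂ x).lt_of_ne' hx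
  have hgpos : ∀ᵐ x ∂μ, 0 < g x := by
    filter_upwards [hp₁pos, hq₁pos] with x hp hq
    exact mul_pos (hfpos₁ _ (div_pos hp hq)) hq
  have hhpos : ∀ᵐ x ∂μ, 0 < h x := by
    filter_upwards [hp₂pos, hq₂pos] with x hp hq
    exact mul_pos (hfpos₂ _ (div_pos hp hq)) hq
  -- integrability of densities
  have hq₁i : Integrable q₁ μ := by
    by_contra hcon; rw [integral_undef hcon] at hq1₁; norm_num at hq1₁
  have hq₂i : Integrable q₂ μ := by
    by_contra hcon; rw [integral_undef hcon] at hq1₂; norm_num at hq1₂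
  have hp₁i : Integrable p₁ μ := by
    by_contra hcon; rw [integral_undef hcon] at hp1₁; norm_num at hp1₁
  have hp₂i : Integrable p₂ μ := by
    by_contra hcon; rw [integral_undef hcon] at hp1₂; norm_num at hp1₂
  set A : ℝ := ∫ x, g x ∂μ with hA
  set B : ℝ := ∫ x, h x ∂μ with hB
  have hf₁1 : 0 < f₁ 1 := hfpos₁ 1 (by norm_num)
  have hf₂1 : 0 < f₂ 1 := hfpos₂ 1 (by norm_num)
  have hAge : f₁ 1 ≤ A :=
    jensen_lower_of_convex μ f₁ p₁ q₁ hf₁ hp₁pos hq₁pos hp₁i hq₁i hp1₁ hq1₁ hint₁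
  have hBle : B ≤ f₂ 1 :=
    jensen_upper_of_concave μ f₂ p₂ q₂ hf₂ hp₂pos hq₂pos hp₂i hq₂i hp1₂ hq1₂ hint₂
  have hApos : 0 < A := lt_of_lt_of_le hf₁1 hAge
  -- B > 0
  have hμ : μ ≠ 0 := by
    intro h0
    rw [h0] at hq1₁
    simp at hq1₁
  have hBpos : 0 < B := by
    rw [hB, integral_pos_iff_support_of_nonneg_ae (hhpos.mono fun x hx => hx.le) hint₂]
    have hsupp : μ (Function.support h)ᶜ = 0 := by
      have h1 : ∀ᵐ x ∂μ, x ∈ Function.support h := hhpos.mono fun x hx => ne_of_gt hx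
      have h2 : (Function.support h)ᶜ = {x | ¬ x ∈ Function.support h} := by
        ext x; simp
      rw [h2]
      exact h1
    by_contra hcon
    push_neg at hcon
    have h0 : μ (Function.support h) = 0 := le_antisymm hcon (by simp)
    have : μ Set.univ = 0 := by
      have := measure_union_le (μ := μ) (Function.support h) (Function.support h)ᶜ
      rw [Set.union_compl_self, h0, hsupp] at this
      simpa using this
    exact hμ (Measure.measure_univ_eq_zero.mp this)
  set t₀ : ℝ := A / B with ht₀def
  have ht₀ : 0 < t₀ := div_pos hApos hBpos
  -- key pointwise inequality
  have key : ∀ᵐ x ∂μ,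
      t₀ ^ a * h x + a * t₀ ^ (a - 1) * (g x - t₀ * h x) ≤ g x ^ a * h x ^ b := by
    filter_upwards [hgpos, hhpos] with x hg hh
    have h1 := rpow_support_line ha1 ht₀ (div_pos hg hh)
    have h2 := mul_le_mul_of_nonneg_right h1 hh.le
    have lhs_eq : (t₀ ^ a + a * t₀ ^ (a - 1) * (g x / h x - t₀)) * h x
        = t₀ ^ a * h x + a * t₀ ^ (a - 1) * (g x - t₀ * h x) := by
      field_simp
    have rhs_eq : (g x / h x) ^ a * h x = g x ^ a * h x ^ b := by
      rw [Real.div_rpow hg.le hh.le, hab, Real.rpow_sub hh, Real.rpow_one]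
      have hha : h x ^ a ≠ 0 := (Real.rpow_pos_of_pos hh a).ne'
      field_simp
    rw [lhs_eq, rhs_eq] at h2
    exact h2
  -- integrate
  have h1i : Integrable (fun x => t₀ ^ a * h x) μ := hint₂.const_mul _
  have hsubi : Integrable (fun x => g x - t₀ * h x) μ := hint₁.sub (hint₂.const_mul t₀)
  have h2i : Integrable (fun x => a * t₀ ^ (a - 1) * (g x - t₀ * h x)) μ :=
    hsubi.const_mul _
  have hLint : Integrable (fun x => t₀ ^ a * h x + a * t₀ ^ (a - 1) * (g x - t₀ * h x)) μ :=
    h1i.add h2i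
  have hmono := integral_mono_ae hLint hintk key
  have htB : t₀ * B = A := by
    rw [ht₀def]; field_simp
  have hcalc : ∫ x, (t₀ ^ a * h x + a * t₀ ^ (a - 1) * (g x - t₀ * h x)) ∂μ
      = t₀ ^ a * B := by
    rw [integral_add h1i h2i, integral_const_mul, integral_const_mul,
      integral_sub hint₁ (hint₂.const_mul t₀), integral_const_mul, ← hA, ← hB, htB]
    ring
  have hI : t₀ ^ a * B ≤ ∫ x, g x ^ a * h x ^ b ∂μ := by
    rw [← hcalc]; exact hmono
  -- t₀ ^ a * B = A ^ a * B ^ b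
  have ht₀B : t₀ ^ a * B = A ^ a * B ^ b := by
    rw [ht₀def, Real.div_rpow hApos.le hBpos.le, hab, Real.rpow_sub hBpos, Real.rpow_one]
    have hBa : B ^ a ≠ 0 := (Real.rpow_pos_of_pos hBpos a).ne'
    field_simp
  have hAB : (f₁ 1) ^ a * (f₂ 1) ^ b ≤ A ^ a * B ^ b := by
    have h1 : (f₁ 1) ^ a ≤ A ^ a := Real.rpow_le_rpow hf₁1.le hAge (by linarith)
    have h2 : (f₂ 1) ^ b ≤ B ^ b := Real.rpow_le_rpow_of_nonpos hBpos hBle hb0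
    exact mul_le_mul h1 h2 (Real.rpow_nonneg hf₂1.le b) (Real.rpow_nonneg hApos.le a)
  have hfinal : (f₁ 1) ^ a * (f₂ 1) ^ b ≤ ∫ x, g x ^ a * h x ^ b ∂μ := by
    calc (f₁ 1) ^ a * (f₂ 1) ^ b ≤ A ^ a * B ^ b := hAB
      _ = t₀ ^ a * B := ht₀B.symm
      _ ≤ _ := hI
  have hPpos : 0 < (f₁ 1) ^ a * (f₂ 1) ^ b :=
    mul_pos (Real.rpow_pos_of_pos hf₁1 a) (Real.rpow_pos_of_pos hf₂1 b)
  have hpow := Real.rpow_le_rpow hPpos.le hfinal (Nat.cast_nonneg n)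
  have hexp : ((f₁ 1) ^ a * (f₂ 1) ^ b) ^ (n:ℝ) = (f₁ 1) ^ k * (f₂ 1) ^ ((n:ℝ) - k) := by
    rw [Real.mul_rpow (Real.rpow_nonneg hf₁1.le a) (Real.rpow_nonneg hf₂1.le b),
      ← Real.rpow_mul hf₁1.le, ← Real.rpow_mul hf₂1.le]
    congr 1
    · congr 1; rw [ha]; field_simp
    · congr 1; rw [hb]; field_simp
  rw [hexp] at hpow
  exact hpow
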